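/- For every point x of Minkowski space and every r > 0, the set B_Z(x;r) = (B_E(x;r) \ N(x)) ∪ {x} is open in the Zeeman fine topology. -/

import Mathlib

noncomputable section

/-- Minkowski space: `ℝ⁴` with the Euclidean topology/metric structure. -/
abbrev Mink : Type := EuclideanSpace ℝ (Fin 4)

/-- The Minkowski quadratic form `Q(v) = −v₀² + v₁² + v₂² + v₃²`. -/
def Q (v : Mink) : ℝ := -(v 0) ^ 2 + (v 1) ^ 2 + (v 2) ^ 2 + (v 3) ^ 2

/-- A spacelike hyperplane: a 3-dimensional affine subspace all of whose nonzero
direction vectors are spacelike (`Q > 0`). -/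
def IsSpacelikeHyperplane (B : Set Mink) : Prop :=
  ∃ (x : Mink) (H : Submodule ℝ Mink), Module.finrank ℝ H = 3 ∧
    (∀ w ∈ H, w ≠ 0 → 0 < Q w) ∧ B = {y | y - x ∈ H}

/-- A timelike line: an affine line with timelike direction (`Q < 0`). -/
def IsTimelikeLine (B : Set Mink) : Prop :=
  ∃ (x v : Mink), Q v < 0 ∧ B = {y | ∃ t : ℝ, y = x + t • v}

/-- A set is Zeeman-open iff its intersection with every spacelike hyperplane and
every timelike line is open in the Euclidean subspace topology of that set. -/
def ZeemanOpen (A : Set Mink) : Prop :=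
  ∀ B : Set Mink, IsSpacelikeHyperplane B ∨ IsTimelikeLine B →
    ∃ U : Set Mink, IsOpen U ∧ A ∩ B = U ∩ B

/-- The null cone at `x`. -/
def nullCone (x : Mink) : Set Mink := {y | Q (y - x) = 0}

/-- The Zeeman ball `B_Z(x;r) = (B_E(x;r) \ N(x)) ∪ {x}`. -/
def BZ (x : Mink) (r : ℝ) : Set Mink := (Metric.ball x r \ nullCone x) ∪ {x}

/-!
A spacelike hyperplane or timelike line through `x` meets the null cone `N(x)` only at `x`,
since `Q` is positive (resp. negative) on its nonzero direction vectors. So on such a set `B`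
the Zeeman ball coincides with the Euclidean ball, while on a set `B` missing `x` it coincides
with `B_E(x;r) \ N(x)`, which is Euclidean-open because `N(x)` is closed.
-/

open Set Metric

lemma Q_smul (c : ℝ) (v : Mink) : Q (c • v) = c ^ 2 * Q v := by
  simp only [Q, PiLp.smul_apply, smul_eq_mul]
  ring

lemma continuous_Q : Continuous Q := by
  have : ∀ i : Fin 4, Continuous fun v : Mink => v i := fun i =>
    (EuclideanSpace.proj i).continuous
  unfold Q
  fun_prop

lemma isClosed_nullCone (x : Mink) : IsClosed (nullCone x) :=
  isClosed_eq (continuous_Q.comp (continuous_id.sub continuous_const)) continuous_const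

lemma self_mem_nullCone (x : Mink) : x ∈ nullCone x := by
  simp [nullCone, Q]

lemma IsSpacelikeHyperplane.inter_nullCone_subset {B : Set Mink}
    (hB : IsSpacelikeHyperplane B) {x : Mink} (hx : x ∈ B) : B ∩ nullCone x ⊆ {x} := by
  obtain ⟨x₀, H, -, hspace, rfl⟩ := hB
  rintro y ⟨hy, hyN⟩
  have hyx : y - x ∈ H := by
    simpa only [sub_sub_sub_cancel_right] using H.sub_mem hy hx
  by_contra hne
  exact (hspace _ hyx (sub_ne_zero.mpr hne)).ne' hyN

lemma IsTimelikeLine.inter_nullCone_subset {B : Set Mink}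
    (hB : IsTimelikeLine B) {x : Mink} (hx : x ∈ B) : B ∩ nullCone x ⊆ {x} := by
  obtain ⟨x₀, v, hv, rfl⟩ := hB
  rintro y ⟨⟨t, rfl⟩, hyN⟩
  obtain ⟨s, rfl⟩ := hx
  have hQ : Q ((t - s) • v) = 0 := by
    rw [sub_smul]; simpa [nullCone, add_sub_add_left_eq_sub] using hyN
  rw [Q_smul, mul_eq_zero, pow_eq_zero_iff two_ne_zero, sub_eq_zero] at hQ
  rcases hQ with rfl | hQv
  · rfl
  · exact absurd hQv hv.ne

lemma BZ_inter_eq_ball_inter {x : Mink} {r : ℝ} (hr : 0 < r) {B : Set Mink}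
    (hB : B ∩ nullCone x ⊆ {x}) : BZ x r ∩ B = ball x r ∩ B := by
  ext y
  by_cases hN : y ∈ nullCone x
  · by_cases hyB : y ∈ B
    · obtain rfl : y = x := hB ⟨hyB, hN⟩
      simp [BZ, hr, hyB]
    · simp [hyB]
  · have hyx : y ≠ x := by rintro rfl; exact hN (self_mem_nullCone y)
    simp [BZ, hN, hyx]

lemma BZ_inter_eq_of_notMem {x : Mink} {B : Set Mink} (hx : x ∉ B) (r : ℝ) :
    BZ x r ∩ B = (ball x r \ nullCone x) ∩ B := by
  rw [BZ, union_inter_distrib_right, singleton_inter_eq_empty.mpr hx, union_empty]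

/-- For every point `x` of Minkowski space and every `r > 0`, the
Zeeman ball `B_Z(x;r) = (B_E(x;r) \ N(x)) ∪ {x}` is open in the Zeeman fine
topology. -/
theorem stmt_6 (x : Mink) (r : ℝ) (hr : 0 < r) : ZeemanOpen (BZ x r) := by
  intro B hB
  by_cases hx : x ∈ B
  · have hcone : B ∩ nullCone x ⊆ {x} := hB.elim
      (·.inter_nullCone_subset hx) (·.inter_nullCone_subset hx)
    exact ⟨ball x r, isOpen_ball, BZ_inter_eq_ball_inter hr hcone⟩
  · exact ⟨ball x r \ nullCone x, isOpen_ball.sdiff (isClosed_nullCone x),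
      BZ_inter_eq_of_notMem hx r⟩
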